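/- arXiv:2512.08030 — 8 statements merged into one kernel-verified Lean document; each statement's English description precedes it below -/
import Mathlib

section
/- Let w : ℝ → ℝ be smooth on (0,∞), continuous at 0, satisfying w'' (x) + w'(x)/x - w(x) = 0 on (0,∞) with w(0) > 0 and w'(0) = 0 (the modified Bessel equation of order 0, so w = c·I₀). Then w'(x) < w(x) for all x in (0,∞), and consequently for all 0 < s < t, w(t) < e^{t-s} w(s). -/
open Real Set

theorem clamped_plate_modified_bessel_subsolution
    (w w' w'' : ℝ → ℝ) (w0 : ℝ)
    (hw : ∀ x ∈ Ioi (0:ℝ), HasDerivAt w (w' x) x)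
    (hw' : ∀ x ∈ Ioi (0:ℝ), HasDerivAt w' (w'' x) x)
    (hode : ∀ x ∈ Ioi (0:ℝ), w'' x + w' x / x - w x = 0)
    (hw0 : Filter.Tendsto w (nhdsWithin 0 (Ioi 0)) (nhds w0))
    (hw0pos : 0 < w0)
    (hw'0 : Filter.Tendsto w' (nhdsWithin 0 (Ioi 0)) (nhds 0)) :
    (∀ x ∈ Ioi (0:ℝ), w' x < w x) ∧
      ∀ s t : ℝ, 0 < s → s < t → w t < Real.exp (t - s) * w s := by
  set E : ℝ → ℝ := fun x => w' x ^ 2 - w x ^ 2 with hE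
  have hEderiv : ∀ x ∈ Ioi (0:ℝ),
      HasDerivAt E (2 * w' x ^ 1 * w'' x - 2 * w x ^ 1 * w' x) x := by
    intro x hx
    exact ((hw' x hx).pow 2).sub ((hw x hx).pow 2)
  have hEanti : AntitoneOn E (Ioi 0) := by
    apply antitoneOn_of_deriv_nonpos (convex_Ioi 0)
    · exact fun x hx => ((hEderiv x hx).continuousAt).continuousWithinAt
    · intro x hx
      rw [interior_Ioi] at hx
      exact ((hEderiv x hx).differentiableAt).differentiableWithinAt
    · intro x hx
      rw [interior_Ioi] at hx
      rw [(hEderiv x hx).deriv]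
      have hx0 : (x:ℝ) ≠ 0 := ne_of_gt hx
      have hode' := hode x hx
      have hwx : w'' x = w x - w' x / x := by linarith
      have : 2 * w' x ^ 1 * w'' x - 2 * w x ^ 1 * w' x = -(2 * (w' x)^2 / x) := by
        rw [hwx]; field_simp; ring
      rw [this]
      have hxp : (0:ℝ) < x := hx
      have : 0 ≤ 2 * (w' x)^2 / x := div_nonneg (by positivity) hxp.le
      linarith
  have hEtend : Filter.Tendsto E (nhdsWithin 0 (Ioi 0)) (nhds (-(w0^2))) := by
    have := ((hw'0.pow 2).sub (hw0.pow 2))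
    simpa using this
  have hEle : ∀ x ∈ Ioi (0:ℝ), E x ≤ -(w0^2) := by
    intro x hx
    refine ge_of_tendsto hEtend ?_
    filter_upwards [Ioo_mem_nhdsGT_of_mem (left_mem_Ico.mpr hx)] with y hy
    exact hEanti hy.1 hx hy.2.le
  have hsq : ∀ x ∈ Ioi (0:ℝ), w' x ^ 2 + w0 ^ 2 ≤ w x ^ 2 := by
    intro x hx
    have := hEle x hx
    simp only [hE] at this
    linarith
  -- w is positive on Ioi 0
  have hwpos : ∀ x ∈ Ioi (0:ℝ), 0 < w x := by
    intro x hx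
    by_contra h
    push_neg at h
    have hne : ∀ z ∈ Ioi (0:ℝ), w z ≠ 0 := by
      intro z hz hz0
      have := hsq z hz
      rw [hz0] at this
      nlinarith [sq_nonneg (w' z)]
    have hxneg : w x < 0 := lt_of_le_of_ne h (hne x hx)
    -- near 0, w is positive
    have hev : ∀ᶠ y in nhdsWithin 0 (Ioi 0), 0 < w y :=
      hw0.eventually (eventually_gt_nhds hw0pos)
    have hne' : (nhdsWithin (0:ℝ) (Ioi 0)).NeBot := nhdsGT_neBot 0
    have hmem : ∀ᶠ y in nhdsWithin (0:ℝ) (Ioi 0), y ∈ Ioo 0 x :=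
      Ioo_mem_nhdsGT_of_mem (left_mem_Ico.mpr hx)
    obtain ⟨y, hwy, hy0, hyx⟩ := (hev.and hmem).exists
    -- y ∈ (0,x), w y > 0, w x < 0 : IVT gives a zero
    have hcont : ContinuousOn w (Icc y x) := by
      intro z hz
      exact ((hw z (lt_of_lt_of_le hy0 hz.1)).continuousAt).continuousWithinAt
    have h0mem : (0:ℝ) ∈ Icc (w x) (w y) := ⟨hxneg.le, hwy.le⟩
    obtain ⟨z, hz, hz0⟩ := intermediate_value_Icc' hyx.le hcont h0mem
    exact hne z (lt_of_lt_of_le hy0 hz.1) hz0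
  have part1 : ∀ x ∈ Ioi (0:ℝ), w' x < w x := by
    intro x hx
    have h1 := hsq x hx
    have h2 := hwpos x hx
    nlinarith [sq_nonneg (w' x + w x), sq_nonneg (w' x - w x)]
  refine ⟨part1, ?_⟩
  intro s t hs hst
  set g : ℝ → ℝ := fun x => w x * Real.exp (-x) with hg
  have hgderiv : ∀ x ∈ Ioi (0:ℝ),
      HasDerivAt g (w' x * Real.exp (-x) + w x * (Real.exp (-x) * -1)) x := by
    intro x hx
    exact (hw x hx).mul ((hasDerivAt_neg x).exp)
  have hganti : StrictAntiOn g (Ioi 0) := by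
    apply strictAntiOn_of_deriv_neg (convex_Ioi 0)
    · exact fun x hx => ((hgderiv x hx).continuousAt).continuousWithinAt
    · intro x hx
      rw [interior_Ioi] at hx
      rw [(hgderiv x hx).deriv]
      have h1 := part1 x hx
      have h2 : 0 < Real.exp (-x) := Real.exp_pos _
      nlinarith
  have key : g t < g s := hganti (mem_Ioi.mpr hs) (mem_Ioi.mpr (hs.trans hst)) hst
  simp only [hg] at key
  have het : (0:ℝ) < Real.exp t := Real.exp_pos t
  have := mul_lt_mul_of_pos_right key het
  calc w t = w t * Real.exp (-t) * Real.exp t := by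
        rw [mul_assoc, ← Real.exp_add]; simp
    _ < w s * Real.exp (-s) * Real.exp t := this
    _ = Real.exp (t - s) * w s := by
        rw [mul_assoc, ← Real.exp_add]; ring_nf
end

section
/- For every λ > 0 and every x ∈ (0,1), one has I₀(√λ · x) / I₀(√λ) > exp(-√λ·(1-x)), where I₀ is the modified Bessel function of the first kind of order 0. -/
/-!
Integrating the exponential series term by term against the moments of `cos` on `[0, π]` gives
`π I₀(t) = ∫₀^π exp (t cos θ) dθ`, hence `π I₀(t) e^{-t} = ∫₀^π exp (-t (1 - cos θ)) dθ`.
Since `1 - cos θ ≥ 0`, with strict inequality away from `θ = 0`, the function `t ↦ I₀(t) e^{-t}`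
is strictly decreasing, and the claim is this monotonicity applied to `√λ x < √λ`.
-/

/-- The modified Bessel function of the first kind of order `0`,
`I₀(x) = ∑ₖ (x/2)^(2k) / (k!)²`. -/
noncomputable def besselI0 (x : ℝ) : ℝ :=
  ∑' k : ℕ, (x / 2) ^ (2 * k) / ((Nat.factorial k : ℝ)) ^ 2

open Real MeasureTheory
open scoped Nat

theorem hasSum_besselI0 (x : ℝ) :
    HasSum (fun k : ℕ => (x / 2) ^ (2 * k) / (k ! : ℝ) ^ 2) (besselI0 x) := by
  refine (Summable.of_nonneg_of_le (fun k => by rw [pow_mul]; positivity) (fun k => ?_)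
    (summable_pow_div_factorial ((x / 2) ^ 2))).hasSum
  rw [pow_mul, sq (k ! : ℝ)]
  exact div_le_div_of_nonneg_left (by positivity) (by positivity)
    (le_mul_of_one_le_left (by positivity) (mod_cast Nat.factorial_pos k))

theorem besselI0_pos (x : ℝ) : 0 < besselI0 x := by
  have h := le_hasSum (hasSum_besselI0 x) 0 fun k _ => by rw [pow_mul]; positivity
  norm_num at h
  linarith

theorem integral_cos_pow_of_odd {n : ℕ} (hn : Odd n) : ∫ θ in (0 : ℝ)..π, cos θ ^ n = 0 := by
  have h := intervalIntegral.integral_comp_sub_left (fun θ => cos θ ^ n) (a := 0) (b := π) π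
  simp only [cos_pi_sub, hn.neg_pow, intervalIntegral.integral_neg, sub_self, sub_zero] at h
  linarith

theorem integral_cos_pow_two_mul (k : ℕ) :
    ∫ θ in (0 : ℝ)..π, cos θ ^ (2 * k) = π * (2 * k)! / (4 ^ k * (k ! : ℝ) ^ 2) := by
  induction k with
  | zero => simp
  | succ k ih =>
    rw [mul_add_one, integral_cos_pow, ih, sin_pi, sin_zero, Nat.factorial_succ, Nat.factorial_succ,
      Nat.factorial_succ]
    push_cast
    field_simp
    ring

theorem hasSum_integral_exp_mul_cos (t : ℝ) :
    HasSum (fun n : ℕ => ∫ θ in (0 : ℝ)..π, (t * cos θ) ^ n / n !)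
      (∫ θ in (0 : ℝ)..π, exp (t * cos θ)) := by
  refine intervalIntegral.hasSum_integral_of_dominated_convergence (fun n _ => |t| ^ n / n !)
    (fun n => by fun_prop) (fun n => ae_of_all _ fun θ _ => ?_)
    (ae_of_all _ fun _ _ => summable_pow_div_factorial |t|) intervalIntegrable_const
    (ae_of_all _ fun θ _ => ?_)
  · rw [norm_div, norm_pow, norm_mul, Real.norm_natCast]
    gcongr
    exact mul_le_of_le_one_right (norm_nonneg t) (abs_cos_le_one θ)
  rw [exp_eq_exp_ℝ]
  exact NormedSpace.expSeries_div_hasSum_exp _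

theorem pi_mul_besselI0_eq_integral (t : ℝ) :
    π * besselI0 t = ∫ θ in (0 : ℝ)..π, exp (t * cos θ) := by
  have hterm (n : ℕ) : ∫ θ in (0 : ℝ)..π, (t * cos θ) ^ n / n ! =
      t ^ n / n ! * ∫ θ in (0 : ℝ)..π, cos θ ^ n := by
    simp only [mul_pow, ← intervalIntegral.integral_const_mul]
    congr 1 with θ
    ring
  have heven (k : ℕ) : ∫ θ in (0 : ℝ)..π, (t * cos θ) ^ (2 * k) / (2 * k)! =
      π * ((t / 2) ^ (2 * k) / (k ! : ℝ) ^ 2) := by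
    rw [hterm, integral_cos_pow_two_mul, div_pow, pow_mul 2, show (2 : ℝ) ^ 2 = 4 by norm_num]
    field_simp
  have hodd (k : ℕ) : ∫ θ in (0 : ℝ)..π, (t * cos θ) ^ (2 * k + 1) / (2 * k + 1)! = 0 := by
    rw [hterm, integral_cos_pow_of_odd (odd_two_mul_add_one k), mul_zero]
  have h := HasSum.even_add_odd (f := fun n : ℕ => ∫ θ in (0 : ℝ)..π, (t * cos θ) ^ n / n !)
    (by simpa only [heven] using (hasSum_besselI0 t).mul_left π)
    (by simpa only [hodd] using hasSum_zero)
  rw [add_zero] at h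
  exact h.unique (hasSum_integral_exp_mul_cos t)

theorem pi_mul_besselI0_mul_exp_neg_eq_integral (t : ℝ) :
    π * (besselI0 t * exp (-t)) = ∫ θ in (0 : ℝ)..π, exp (-(t * (1 - cos θ))) := by
  rw [← mul_assoc, pi_mul_besselI0_eq_integral, ← intervalIntegral.integral_mul_const]
  congr 1 with θ
  rw [← exp_add]
  ring_nf

theorem strictAnti_besselI0_mul_exp_neg : StrictAnti fun t => besselI0 t * exp (-t) := by
  intro s t hst
  refine lt_of_mul_lt_mul_left ?_ pi_pos.le
  simp only [pi_mul_besselI0_mul_exp_neg_eq_integral]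
  refine intervalIntegral.integral_lt_integral_of_continuousOn_of_le_of_exists_lt pi_pos
    (by fun_prop) (by fun_prop) (fun θ _ => ?_) ⟨π / 2, ⟨by positivity, by linarith [pi_pos]⟩, ?_⟩
  · gcongr
    linarith [cos_le_one θ]
  · simpa [cos_pi_div_two] using hst

theorem besselI0_ratio_gt_exp (lam x : ℝ) (hlam : 0 < lam) (hx : x ∈ Set.Ioo (0:ℝ) 1) :
    besselI0 (Real.sqrt lam * x) / besselI0 (Real.sqrt lam) >
      Real.exp (-(Real.sqrt lam) * (1 - x)) := by
  set s := Real.sqrt lam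
  have hs : 0 < s := Real.sqrt_pos.mpr hlam
  have hlt : s * x < s := mul_lt_of_lt_one_right hs hx.2
  rw [gt_iff_lt, lt_div_iff₀ (besselI0_pos s)]
  calc exp (-s * (1 - x)) * besselI0 s = besselI0 s * exp (-s) * exp (s * x) := by
        rw [mul_assoc, ← exp_add, mul_comm, show -s + s * x = -s * (1 - x) by ring]
    _ < besselI0 (s * x) * exp (-(s * x)) * exp (s * x) := by
        gcongr ?_ * _; exact strictAnti_besselI0_mul_exp_neg hlt
    _ = besselI0 (s * x) := by rw [mul_assoc, ← exp_add, neg_add_cancel, exp_zero, mul_one]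
end

section
/- There exists a unique r ∈ (0,1) satisfying log(r) + √(1-r²) - log(1 + √(1-r²)) - r + 1 = 0, and this unique solution lies in the interval (0.443, 0.444). -/
/-!
Write `s = √(1 - x²)`. The derivative of the function is `s / x - 1`, positive below `√(1/2)` and
negative above it, and the function vanishes at `1`. So it is positive on `[√(1/2), 1)` and injective
on `(0, √(1/2)]`, which leaves at most one zero in `(0, 1)`. Taking exponentials, its sign at `x` is
that of `1 + s - x · exp (s + 1 - x)`, and Taylor bounds on `exp` show this changes sign between
`0.443` and `0.444`.
-/

open Real Set

noncomputable def rInftyFun (x : ℝ) : ℝ :=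
  log x + √(1 - x ^ 2) - log (1 + √(1 - x ^ 2)) - x + 1

lemma rInftyFun_eq_log_sub_log {x : ℝ} (hx : 0 < x) :
    rInftyFun x = log (x * exp (√(1 - x ^ 2) + 1 - x)) - log (1 + √(1 - x ^ 2)) := by
  rw [rInftyFun, log_mul hx.ne' (exp_pos _).ne', log_exp]
  ring

lemma rInftyFun_neg_iff {x : ℝ} (hx : 0 < x) :
    rInftyFun x < 0 ↔ x * exp (√(1 - x ^ 2) + 1 - x) < 1 + √(1 - x ^ 2) := by
  rw [rInftyFun_eq_log_sub_log hx, sub_neg, log_lt_log_iff (by positivity) (by positivity)]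

lemma rInftyFun_pos_iff {x : ℝ} (hx : 0 < x) :
    0 < rInftyFun x ↔ 1 + √(1 - x ^ 2) < x * exp (√(1 - x ^ 2) + 1 - x) := by
  rw [rInftyFun_eq_log_sub_log hx, sub_pos, log_lt_log_iff (by positivity) (by positivity)]

lemma rInftyFun_one : rInftyFun 1 = 0 := by
  norm_num [rInftyFun]

lemma continuousOn_rInftyFun : ContinuousOn rInftyFun (Ioi 0) := by
  have hsqrt : Continuous fun x : ℝ => √(1 - x ^ 2) := by fun_prop
  refine ((((continuousOn_log.mono fun x hx => ne_of_gt hx).add hsqrt.continuousOn).sub ?_).sub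
    continuousOn_id).add continuousOn_const
  exact (continuous_const.add hsqrt).continuousOn.log fun x _ =>
    (by positivity : (0 : ℝ) < 1 + √(1 - x ^ 2)).ne'

lemma hasDerivAt_rInftyFun {x : ℝ} (hx0 : 0 < x) (hx1 : x < 1) :
    HasDerivAt rInftyFun (√(1 - x ^ 2) / x - 1) x := by
  have hpos : 0 < 1 - x ^ 2 := by nlinarith
  set s := √(1 - x ^ 2)
  have hs0 : 0 < s := sqrt_pos.mpr hpos
  have hs2 : s ^ 2 = 1 - x ^ 2 := sq_sqrt hpos.le
  have hsqrt : HasDerivAt (fun y : ℝ => √(1 - y ^ 2)) (-x / s) x := by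
    convert ((hasDerivAt_pow 2 x).const_sub 1).sqrt hpos.ne' using 1
    field_simp
    ring
  have hlog : HasDerivAt (fun y : ℝ => log (1 + √(1 - y ^ 2))) (-x / s / (1 + s)) x :=
    (hsqrt.const_add 1).log (by positivity)
  refine ((((hasDerivAt_log hx0.ne').add hsqrt).sub hlog).sub (hasDerivAt_id x)).add_const 1
    |>.congr_deriv ?_
  field_simp
  linear_combination -s * hs2

lemma exp_1_452_gt : (4.271 : ℝ) < exp 1.452 := by
  have htaylor := sum_le_exp_of_nonneg (x := 0.452) (by norm_num) 8
  simp only [Finset.sum_range_succ, Finset.sum_range_zero] at htaylor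
  norm_num [Nat.factorial] at htaylor
  rw [show (1.452 : ℝ) = 1 + 0.452 by norm_num, exp_add]
  nlinarith [exp_one_gt_d9]

lemma exp_1_4536_lt : exp 1.4536 < (4.279 : ℝ) := by
  have htaylor := exp_bound' (x := 0.4536) (by norm_num) (by norm_num) (n := 8) (by norm_num)
  simp only [Finset.sum_range_succ, Finset.sum_range_zero] at htaylor
  norm_num [Nat.factorial] at htaylor
  rw [show (1.4536 : ℝ) = 1 + 0.4536 by norm_num, exp_add]
  nlinarith [exp_one_lt_d9, exp_pos 1, exp_pos 0.4536]

lemma rInftyFun_0_443_neg : rInftyFun 0.443 < 0 := by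
  have hs_gt : 0.8965 < √(1 - (0.443 : ℝ) ^ 2) := (lt_sqrt (by norm_num)).mpr (by norm_num)
  have hs_lt : √(1 - (0.443 : ℝ) ^ 2) < 0.8966 := (sqrt_lt' (by norm_num)).mpr (by norm_num)
  have hexp : exp (√(1 - (0.443 : ℝ) ^ 2) + 1 - 0.443) < 4.279 :=
    (exp_lt_exp.mpr (by linarith)).trans exp_1_4536_lt
  rw [rInftyFun_neg_iff (by norm_num)]
  linarith

lemma rInftyFun_0_444_pos : 0 < rInftyFun 0.444 := by
  have hs_gt : 0.896 < √(1 - (0.444 : ℝ) ^ 2) := (lt_sqrt (by norm_num)).mpr (by norm_num)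
  have hs_lt : √(1 - (0.444 : ℝ) ^ 2) < 0.8961 := (sqrt_lt' (by norm_num)).mpr (by norm_num)
  have hexp : 4.271 < exp (√(1 - (0.444 : ℝ) ^ 2) + 1 - 0.444) :=
    exp_1_452_gt.trans (exp_lt_exp.mpr (by linarith))
  rw [rInftyFun_pos_iff (by norm_num)]
  linarith

lemma strictMonoOn_rInftyFun : StrictMonoOn rInftyFun (Ioc 0 √(1 / 2)) := by
  refine strictMonoOn_of_deriv_pos (convex_Ioc _ _)
    (continuousOn_rInftyFun.mono Ioc_subset_Ioi_self) fun x hx => ?_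
  rw [interior_Ioc] at hx
  obtain ⟨hx0, hxc⟩ := hx
  have hx2 : x ^ 2 < 1 / 2 := (lt_sqrt hx0.le).mp hxc
  have hxs : x < √(1 - x ^ 2) := (lt_sqrt hx0.le).mpr (by linarith)
  rw [(hasDerivAt_rInftyFun hx0 (by nlinarith)).deriv, sub_pos, one_lt_div hx0]
  exact hxs

lemma strictAntiOn_rInftyFun : StrictAntiOn rInftyFun (Icc √(1 / 2) 1) := by
  have hc : 0 < √(1 / 2 : ℝ) := by positivity
  refine strictAntiOn_of_deriv_neg (convex_Icc _ _)
    (continuousOn_rInftyFun.mono fun x hx => hc.trans_le hx.1) fun x hx => ?_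
  rw [interior_Icc] at hx
  obtain ⟨hcx, hx1⟩ := hx
  have hx0 : 0 < x := hc.trans hcx
  have hx2 : 1 / 2 < x ^ 2 := (sqrt_lt' hx0).mp hcx
  have hsx : √(1 - x ^ 2) < x := (sqrt_lt' hx0).mpr (by linarith)
  rw [(hasDerivAt_rInftyFun hx0 hx1).deriv, sub_neg, div_lt_one hx0]
  exact hsx

lemma rInftyFun_pos_of_mem_Ico {x : ℝ} (hx : x ∈ Ico √(1 / 2) 1) : 0 < rInftyFun x := by
  have hc1 : √(1 / 2 : ℝ) ≤ 1 := sqrt_le_one.mpr (by norm_num)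
  simpa [rInftyFun_one] using
    strictAntiOn_rInftyFun (Ico_subset_Icc_self hx) ⟨hc1, le_rfl⟩ hx.2

lemma subsingleton_rInftyFun_zeros : {x ∈ Ioo 0 1 | rInftyFun x = 0}.Subsingleton := by
  have hle : ∀ z ∈ Ioo (0 : ℝ) 1, rInftyFun z = 0 → z ≤ √(1 / 2) := fun z hz hfz =>
    le_of_not_ge fun hcz => (rInftyFun_pos_of_mem_Ico ⟨hcz, hz.2⟩).ne' hfz
  rintro x ⟨hx, hfx⟩ y ⟨hy, hfy⟩
  exact strictMonoOn_rInftyFun.injOn ⟨hx.1, hle x hx hfx⟩ ⟨hy.1, hle y hy hfy⟩ (hfx.trans hfy.symm)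

theorem exists_unique_root_r_infty :
    ∃ r : ℝ, (r ∈ Set.Ioo (0:ℝ) 1 ∧
        Real.log r + Real.sqrt (1 - r ^ 2) - Real.log (1 + Real.sqrt (1 - r ^ 2)) - r + 1 = 0) ∧
      r ∈ Set.Ioo (0.443 : ℝ) 0.444 ∧
      ∀ r' : ℝ, r' ∈ Set.Ioo (0:ℝ) 1 →
        Real.log r' + Real.sqrt (1 - r' ^ 2) - Real.log (1 + Real.sqrt (1 - r' ^ 2)) - r' + 1 = 0 →
        r' = r := by
  obtain ⟨r, hr, hr_root⟩ : (0 : ℝ) ∈ rInftyFun '' Ioo 0.443 0.444 :=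
    intermediate_value_Ioo (by norm_num)
      (continuousOn_rInftyFun.mono fun x hx => lt_of_lt_of_le (by norm_num) hx.1)
      ⟨rInftyFun_0_443_neg, rInftyFun_0_444_pos⟩
  have hr01 : r ∈ Ioo (0 : ℝ) 1 := ⟨by linarith [hr.1], by linarith [hr.2]⟩
  exact ⟨r, ⟨hr01, hr_root⟩, hr, fun r' hr' hr'_root =>
    subsingleton_rInftyFun_zeros ⟨hr', hr'_root⟩ ⟨hr01, hr_root⟩⟩
end

section
/- Let ζ_∞ be the unique zero in (0,1) of s ↦ ϱ(s) - s + 1, where ϱ(s) = log(s) + √(1-s²) - log(1+√(1-s²)), and let σ = √(1-ζ_∞²) - ζ_∞. Then for all s ∈ (0,1), σ · log(s/ζ_∞) ≥ ϱ(s) - s + 1. -/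
/-- The Debye exponent `ϱ(s) = log s + √(1-s²) - log(1+√(1-s²))`. -/
noncomputable def debyeRho (s : ℝ) : ℝ :=
  Real.log s + Real.sqrt (1 - s ^ 2) - Real.log (1 + Real.sqrt (1 - s ^ 2))

/-!
In the variable `t = log s` the function `ϱ(s) - s` is concave: its `t`-derivative is
`s ϱ'(s) - s = √(1-s²) - s`, which decreases in `s`. Hence it lies below its tangent at
`t = log ζ`, whose slope is `σ = √(1-ζ²) - ζ`; since `ϱ(ζ) - ζ + 1 = 0`, that tangent is
`σ log (s/ζ) - 1`. Concretely, `ϱ(s) - s - σ log s` has derivative `(√(1-s²) - s - σ)/s`,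
which changes sign from `+` to `-` at `ζ`.
-/

open Real Set

lemma hasDerivAt_debyeRho {x : ℝ} (hx0 : 0 < x) (hx1 : x < 1) :
    HasDerivAt debyeRho (√(1 - x ^ 2) / x) x := by
  have hpos : 0 < 1 - x ^ 2 := by nlinarith
  have hsq : √(1 - x ^ 2) ^ 2 = 1 - x ^ 2 := sq_sqrt hpos.le
  have hinner : HasDerivAt (fun s : ℝ => 1 - s ^ 2) (-(2 * x)) x := by
    simpa using (hasDerivAt_pow 2 x).const_sub 1
  have hsqrt : HasDerivAt (fun s : ℝ => √(1 - s ^ 2)) (1 / (2 * √(1 - x ^ 2)) * -(2 * x)) x :=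
    (hasDerivAt_sqrt hpos.ne').comp x hinner
  have hlog := (hsqrt.const_add 1).log (by positivity)
  refine ((hasDerivAt_log hx0.ne').add hsqrt |>.sub hlog).congr_deriv ?_
  field_simp
  linear_combination (-√(1 - x ^ 2)) * hsq

lemma strictMonoOn_sub_sqrt_one_sub_sq :
    StrictMonoOn (fun s : ℝ => s - √(1 - s ^ 2)) (Icc 0 1) := by
  intro a ha b hb hab
  have : √(1 - b ^ 2) < √(1 - a ^ 2) :=
    sqrt_lt_sqrt (by nlinarith [hb.1, hb.2]) (by nlinarith [ha.1])
  simp only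
  linarith

lemma hasDerivAt_debyeRho_sub_sub_mul_log (c : ℝ) {x : ℝ} (hx0 : 0 < x) (hx1 : x < 1) :
    HasDerivAt (fun s => debyeRho s - s - c * log s) ((√(1 - x ^ 2) - x - c) / x) x := by
  refine ((hasDerivAt_debyeRho hx0 hx1).sub (hasDerivAt_id x) |>.sub
    ((hasDerivAt_log hx0.ne').const_mul c)).congr_deriv ?_
  field_simp

lemma isMaxOn_debyeRho_sub_sub_mul_log {ζ : ℝ} (hζ : ζ ∈ Ioo (0 : ℝ) 1) :
    IsMaxOn (fun s => debyeRho s - s - (√(1 - ζ ^ 2) - ζ) * log s) (Ioo 0 1) ζ := by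
  obtain ⟨hζ0, hζ1⟩ := hζ
  set σ := √(1 - ζ ^ 2) - ζ
  have hderiv : ∀ x ∈ Ioo (0 : ℝ) 1, HasDerivAt (fun s => debyeRho s - s - σ * log s)
      ((√(1 - x ^ 2) - x - σ) / x) x :=
    fun x hx => hasDerivAt_debyeRho_sub_sub_mul_log σ hx.1 hx.2
  have hmono := strictMonoOn_sub_sqrt_one_sub_sq
  have hζmem : ζ ∈ Icc (0 : ℝ) 1 := ⟨hζ0.le, hζ1.le⟩
  refine isMaxOn_Ioo_of_deriv (hderiv ζ ⟨hζ0, hζ1⟩).continuousAt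
    (fun x hx => (hderiv x ⟨hx.1, hx.2.trans hζ1⟩).differentiableAt.differentiableWithinAt)
    (fun x hx => (hderiv x ⟨hζ0.trans hx.1, hx.2⟩).differentiableAt.differentiableWithinAt)
    (fun x hx => ?_) (fun x hx => ?_)
  · rw [(hderiv x ⟨hx.1, hx.2.trans hζ1⟩).deriv]
    have := hmono ⟨hx.1.le, (hx.2.trans hζ1).le⟩ hζmem hx.2
    exact div_nonneg (by simp only [σ] at this ⊢; linarith) hx.1.le
  · rw [(hderiv x ⟨hζ0.trans hx.1, hx.2⟩).deriv]
    have := hmono hζmem ⟨(hζ0.trans hx.1).le, hx.2.le⟩ hx.1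
    exact div_nonpos_of_nonpos_of_nonneg (by simp only [σ] at this ⊢; linarith)
      (hζ0.trans hx.1).le

theorem log_tangent_dominates_general (ζ : ℝ) (hζ : ζ ∈ Set.Ioo (0:ℝ) 1)
    (hzero : debyeRho ζ - ζ + 1 = 0) :
    ∀ s ∈ Set.Ioo (0:ℝ) 1,
      (Real.sqrt (1 - ζ ^ 2) - ζ) * Real.log (s / ζ) ≥ debyeRho s - s + 1 := by
  intro s hs
  have hmax : debyeRho s - s - (√(1 - ζ ^ 2) - ζ) * log s ≤
      debyeRho ζ - ζ - (√(1 - ζ ^ 2) - ζ) * log ζ :=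
    isMaxOn_debyeRho_sub_sub_mul_log hζ hs
  rw [log_div hs.1.ne' hζ.1.ne']
  linarith

theorem log_tangent_dominates (ζ : ℝ) (hζ : ζ ∈ Set.Ioo (0:ℝ) 1)
    (hzero : debyeRho ζ - ζ + 1 = 0)
    (huniq : ∀ s ∈ Set.Ioo (0:ℝ) 1, debyeRho s - s + 1 = 0 → s = ζ) :
    ∀ s ∈ Set.Ioo (0:ℝ) 1,
      (Real.sqrt (1 - ζ ^ 2) - ζ) * Real.log (s / ζ) ≥ debyeRho s - s + 1 :=
  log_tangent_dominates_general ζ hζ hzero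
end

section
/- For each σ ∈ (0,1], the function p_σ(y) = σ·√(1-y²)/y is a subsolution on (0,1) of the Riccati equation (1/n) q'(y) + q(y)² + q(y)/(n y) + 1 - 1/y² = 0, i.e. (1/n) p_σ'(y) + p_σ(y)² + p_σ(y)/(n y) + 1 - 1/y² ≤ 0 for all y ∈ (0,1), for every integer n ≥ 1. -/
/-!
Writing `s = √(1 - y²)` and `p = σ s / y`, one has `p' = -σ / (y² s)`, so the two first-order
terms of the Riccati operator combine into `(1/n)(p' + p/y) = -σ / (n s) ≤ 0`, while the
remaining terms are `p² + 1 - 1/y² = (σ² - 1)(1 - y²) / y² ≤ 0` because `σ ≤ 1`.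
-/

open Real

noncomputable def riccatiSubsol (σ y : ℝ) : ℝ := σ * √(1 - y ^ 2) / y

variable {σ y : ℝ}

theorem hasDerivAt_riccatiSubsol (hy0 : y ≠ 0) (hy1 : y ^ 2 < 1) :
    HasDerivAt (riccatiSubsol σ) (-σ / (y ^ 2 * √(1 - y ^ 2))) y := by
  have hpos : 0 < 1 - y ^ 2 := by linarith
  have hs : √(1 - y ^ 2) ^ 2 = 1 - y ^ 2 := sq_sqrt hpos.le
  have hs0 : √(1 - y ^ 2) ≠ 0 := (sqrt_pos.mpr hpos).ne'
  have hinner : HasDerivAt (fun z : ℝ => 1 - z ^ 2) (-(2 * y)) y := by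
    simpa using (hasDerivAt_pow 2 y).const_sub 1
  have h := (((hasDerivAt_sqrt hpos.ne').comp y hinner).const_mul σ).div (hasDerivAt_id' y) hy0
  refine h.congr_deriv ?_
  simp only [Function.comp_apply]
  field_simp
  linear_combination (-σ) * hs

theorem deriv_riccatiSubsol_add_div_self (hy0 : y ≠ 0) (hy1 : y ^ 2 < 1) :
    deriv (riccatiSubsol σ) y + riccatiSubsol σ y / y = -σ / √(1 - y ^ 2) := by
  have hpos : 0 < 1 - y ^ 2 := by linarith
  have hs : √(1 - y ^ 2) ^ 2 = 1 - y ^ 2 := sq_sqrt hpos.le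
  have hs0 : √(1 - y ^ 2) ≠ 0 := (sqrt_pos.mpr hpos).ne'
  rw [(hasDerivAt_riccatiSubsol hy0 hy1).deriv, riccatiSubsol]
  field_simp
  linear_combination σ * hs

theorem riccatiSubsol_sq_add_one_sub_inv_sq (hy0 : y ≠ 0) (hy1 : y ^ 2 ≤ 1) :
    riccatiSubsol σ y ^ 2 + 1 - 1 / y ^ 2 = (σ ^ 2 - 1) * (1 - y ^ 2) / y ^ 2 := by
  rw [riccatiSubsol, div_pow, mul_pow, sq_sqrt (by linarith)]
  field_simp
  ring

theorem riccatiSubsol_sq_add_one_sub_inv_sq_nonpos (hσ : σ ^ 2 ≤ 1) (hy0 : y ≠ 0)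
    (hy1 : y ^ 2 ≤ 1) : riccatiSubsol σ y ^ 2 + 1 - 1 / y ^ 2 ≤ 0 := by
  rw [riccatiSubsol_sq_add_one_sub_inv_sq hy0 hy1]
  exact div_nonpos_of_nonpos_of_nonneg
    (mul_nonpos_of_nonpos_of_nonneg (by linarith) (by linarith)) (sq_nonneg y)

theorem riccati_subsolution_J_general (n : ℕ) (σ : ℝ) (hσ : σ ∈ Set.Ioc (0:ℝ) 1) :
    ∀ y ∈ Set.Ioo (0:ℝ) 1,
      (1 / (n : ℝ)) * deriv (fun z : ℝ => σ * Real.sqrt (1 - z ^ 2) / z) y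
        + (σ * Real.sqrt (1 - y ^ 2) / y) ^ 2
        + (σ * Real.sqrt (1 - y ^ 2) / y) / ((n : ℝ) * y) + 1 - 1 / y ^ 2 ≤ 0 := by
  obtain ⟨hσ0, hσ1⟩ := hσ
  rintro y ⟨hy0, hy1⟩
  have hy_sq : y ^ 2 < 1 := by nlinarith
  have hlin := deriv_riccatiSubsol_add_div_self (σ := σ) hy0.ne' hy_sq
  have hquad :=
    riccatiSubsol_sq_add_one_sub_inv_sq_nonpos (σ := σ) (by nlinarith) hy0.ne' hy_sq.le
  change 1 / (n : ℝ) * deriv (riccatiSubsol σ) y + riccatiSubsol σ y ^ 2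
    + riccatiSubsol σ y / (n * y) + 1 - 1 / y ^ 2 ≤ 0
  calc _ = 1 / (n : ℝ) * (deriv (riccatiSubsol σ) y + riccatiSubsol σ y / y)
          + (riccatiSubsol σ y ^ 2 + 1 - 1 / y ^ 2) := by ring
    _ ≤ 0 := by
      refine add_nonpos (mul_nonpos_of_nonneg_of_nonpos (by positivity) ?_) hquad
      rw [hlin]
      exact div_nonpos_of_nonpos_of_nonneg (by linarith) (sqrt_nonneg _)

theorem riccati_subsolution_J (n : ℕ) (hn : 1 ≤ n) (σ : ℝ) (hσ : σ ∈ Set.Ioc (0:ℝ) 1) :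
    ∀ y ∈ Set.Ioo (0:ℝ) 1,
      (1 / (n : ℝ)) * deriv (fun z : ℝ => σ * Real.sqrt (1 - z ^ 2) / z) y
        + (σ * Real.sqrt (1 - y ^ 2) / y) ^ 2
        + (σ * Real.sqrt (1 - y ^ 2) / y) / ((n : ℝ) * y) + 1 - 1 / y ^ 2 ≤ 0 :=
  riccati_subsolution_J_general n σ hσ
end

section
/- Let n ≥ 1 be an integer and let q : (0,1) → ℝ be a continuously differentiable solution of (1/n) q' + q² + q/(ny) + 1 - 1/y² = 0 with q(y) = 1/y + O(1) as y → 0⁺. Then q(y) > √(1-y²)/y for all y ∈ (0,1). -/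
/-!
The barriers `p_σ(y) = σ √(1 - y²) / y`, `0 < σ ≤ 1`, are strict subsolutions of the Riccati
equation: wherever `q` touches `p_σ`, the equation forces
`q' - p_σ' = n (1 - y²)(1 - σ²) / y² + σ / √(1 - y²) > 0`.
For `σ < 1` the asymptotics `q = 1/y + O(1)` put `q` above `p_σ` near `0`, so the fencing
theorem keeps `q ≥ p_σ` on all of `(0, 1)`. Letting `σ → 1` gives `q ≥ p_1`, and a point of
contact with `p_1` would be a local minimum of `q - p_1` with nonzero derivative.
-/

open Asymptotics Filter Set Topology

noncomputable def riccatiBarrier (σ y : ℝ) : ℝ := σ * (Real.sqrt (1 - y ^ 2) / y)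

lemma hasDerivAt_riccatiBarrier (σ : ℝ) {y : ℝ} (hy0 : y ≠ 0) (hy1 : y ^ 2 < 1) :
    HasDerivAt (riccatiBarrier σ) (-σ / (Real.sqrt (1 - y ^ 2) * y ^ 2)) y := by
  have hpos : 0 < 1 - y ^ 2 := by linarith
  have hsqrt : HasDerivAt (fun t => Real.sqrt (1 - t ^ 2))
      (1 / (2 * Real.sqrt (1 - y ^ 2)) * -(2 * y)) y :=
    (Real.hasDerivAt_sqrt hpos.ne').comp y (by simpa using (hasDerivAt_pow 2 y).const_sub 1)
  refine ((hsqrt.div (hasDerivAt_id y) hy0).const_mul σ).congr_deriv ?_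
  have hs2 : Real.sqrt (1 - y ^ 2) ^ 2 = 1 - y ^ 2 := Real.sq_sqrt hpos.le
  have hs0 : Real.sqrt (1 - y ^ 2) ≠ 0 := (Real.sqrt_pos.2 hpos).ne'
  simp only [id]
  field_simp
  linear_combination (-σ) * hs2

lemma eventually_riccatiBarrier_lt {q : ℝ → ℝ} {σ : ℝ} (hσ0 : 0 ≤ σ) (hσ1 : σ < 1)
    (hasym : (fun y => q y - 1 / y) =O[𝓝[>] 0] (fun _ => (1 : ℝ))) :
    ∀ᶠ y in 𝓝[>] 0, riccatiBarrier σ y < q y := by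
  obtain ⟨C, hC⟩ := hasym.bound
  have hlarge : ∀ᶠ y in 𝓝[>] (0 : ℝ), C / (1 - σ) < y⁻¹ :=
    tendsto_inv_nhdsGT_zero.eventually_gt_atTop _
  filter_upwards [hC, hlarge, self_mem_nhdsWithin] with y hCy hy (hy0 : 0 < y)
  have hq : 1 / y - C ≤ q y := by
    simp only [norm_one, mul_one, Real.norm_eq_abs] at hCy
    linarith [(abs_le.mp hCy).1]
  have hC_lt : C * y < 1 - σ := by
    rw [div_lt_iff₀ (by linarith)] at hy
    have := mul_lt_mul_of_pos_right hy hy0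
    rwa [mul_comm y⁻¹, mul_assoc, inv_mul_cancel₀ hy0.ne', mul_one] at this
  have hs : Real.sqrt (1 - y ^ 2) ≤ 1 := Real.sqrt_le_one.2 (by nlinarith)
  calc riccatiBarrier σ y ≤ σ / y := by
        rw [riccatiBarrier, mul_div_assoc', div_le_div_iff_of_pos_right hy0]
        exact mul_le_of_le_one_right hσ0 hs
    _ < 1 / y - C := by
        rw [lt_sub_iff_add_lt, div_add' _ _ _ hy0.ne', div_lt_div_iff_of_pos_right hy0]
        linarith
    _ ≤ q y := hq

lemma riccatiBarrier_deriv_lt_of_touch {n σ y Q Q' : ℝ} (hn : 0 < n) (hσ0 : 0 < σ)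
    (hσ1 : σ ≤ 1) (hy : y ∈ Ioo 0 1)
    (hode : (1 / n) * Q' + Q ^ 2 + Q / (n * y) + 1 - 1 / y ^ 2 = 0)
    (htouch : Q = riccatiBarrier σ y) :
    -σ / (Real.sqrt (1 - y ^ 2) * y ^ 2) < Q' := by
  obtain ⟨hy0, hy1⟩ := hy
  rw [htouch, riccatiBarrier] at hode
  set s := Real.sqrt (1 - y ^ 2)
  have hs2 : s ^ 2 = 1 - y ^ 2 := Real.sq_sqrt (by nlinarith)
  have hs : 0 < s := Real.sqrt_pos.2 (by nlinarith)
  have hQ' : Q' * y ^ 2 = n * (1 - y ^ 2) * (1 - σ ^ 2) - σ * s := by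
    field_simp at hode
    linear_combination hode - n * σ ^ 2 * hs2
  have hgap : Q' + σ / (s * y ^ 2) = n * (1 - y ^ 2) * (1 - σ ^ 2) / y ^ 2 + σ / s := by
    field_simp
    linear_combination s * hQ' - σ * hs2
  have hfirst : 0 ≤ n * (1 - y ^ 2) * (1 - σ ^ 2) / y ^ 2 := by
    have : 0 ≤ 1 - σ ^ 2 := by nlinarith
    have : 0 ≤ 1 - y ^ 2 := by nlinarith
    positivity
  have : 0 < σ / s := by positivity
  rw [neg_div]
  linarith

lemma riccatiBarrier_le_of_eventually_le {n σ : ℝ} {q q' : ℝ → ℝ} (hn : 0 < n)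
    (hσ0 : 0 < σ) (hσ1 : σ ≤ 1)
    (hq : ∀ y ∈ Ioo (0 : ℝ) 1, HasDerivAt q (q' y) y)
    (hode : ∀ y ∈ Ioo (0 : ℝ) 1,
      (1 / n) * q' y + q y ^ 2 + q y / (n * y) + 1 - 1 / y ^ 2 = 0)
    (hnear : ∀ᶠ y in 𝓝[>] 0, riccatiBarrier σ y ≤ q y) :
    ∀ y ∈ Ioo (0 : ℝ) 1, riccatiBarrier σ y ≤ q y := by
  intro y hy
  obtain ⟨a, ha, ha0, hay⟩ := (hnear.and (Ioo_mem_nhdsGT hy.1)).exists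
  have hsub : Icc a y ⊆ Ioo 0 1 := fun z hz => ⟨ha0.trans_le hz.1, hz.2.trans_lt hy.2⟩
  have hbarrier : ∀ z ∈ Icc a y, HasDerivAt (riccatiBarrier σ)
      (-σ / (Real.sqrt (1 - z ^ 2) * z ^ 2)) z := fun z hz =>
    hasDerivAt_riccatiBarrier σ (hsub hz).1.ne' (by nlinarith [(hsub hz).1, (hsub hz).2])
  refine image_le_of_deriv_right_lt_deriv_boundary'
    (fun z hz => (hbarrier z hz).continuousAt.continuousWithinAt)
    (fun z hz => (hbarrier z (Ico_subset_Icc_self hz)).hasDerivWithinAt) ha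
    (fun z hz => (hq z (hsub hz)).continuousAt.continuousWithinAt)
    (fun z hz => (hq z (hsub (Ico_subset_Icc_self hz))).hasDerivWithinAt)
    (fun z hz htouch => ?_) ⟨hay.le, le_rfl⟩
  have hz := hsub (Ico_subset_Icc_self hz)
  exact riccatiBarrier_deriv_lt_of_touch hn hσ0 hσ1 hz (hode z hz) htouch.symm

lemma lt_of_eventually_le_of_hasDerivAt {f g : ℝ → ℝ} {f' g' x : ℝ}
    (hle : ∀ᶠ z in 𝓝 x, f z ≤ g z) (hf : HasDerivAt f f' x) (hg : HasDerivAt g g' x)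
    (htouch : f x = g x → f' < g') : f x < g x := by
  refine hle.self_of_nhds.lt_of_ne fun heq => ?_
  have hmin : IsLocalMin (g - f) x := by
    filter_upwards [hle] with z hz
    simp only [Pi.sub_apply]
    linarith
  have := hmin.hasDerivAt_eq_zero (hg.sub hf)
  linarith [htouch heq]

theorem riccati_comparison_J_general (n : ℕ) (hn : 1 ≤ n) (q q' : ℝ → ℝ)
    (hq : ∀ y ∈ Set.Ioo (0:ℝ) 1, HasDerivAt q (q' y) y)
    (hode : ∀ y ∈ Set.Ioo (0:ℝ) 1,
      (1 / (n : ℝ)) * q' y + q y ^ 2 + q y / ((n : ℝ) * y) + 1 - 1 / y ^ 2 = 0)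
    (hasym : (fun y => q y - 1 / y) =O[nhdsWithin 0 (Set.Ioi 0)] (fun _ => (1:ℝ))) :
    ∀ y ∈ Set.Ioo (0:ℝ) 1, Real.sqrt (1 - y ^ 2) / y < q y := by
  have hn' : (0 : ℝ) < n := by exact_mod_cast hn
  have hσ_le : ∀ σ ∈ Ioo (0 : ℝ) 1, ∀ y ∈ Ioo (0 : ℝ) 1, riccatiBarrier σ y ≤ q y :=
    fun σ hσ => riccatiBarrier_le_of_eventually_le hn' hσ.1 hσ.2.le hq hode
      ((eventually_riccatiBarrier_lt hσ.1.le hσ.2 hasym).mono fun _ h => h.le)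
  have h_le : ∀ y ∈ Ioo (0 : ℝ) 1, riccatiBarrier 1 y ≤ q y := fun y hy =>
    le_of_tendsto (((continuous_mul_const _).tendsto 1).mono_left nhdsWithin_le_nhds)
      (eventually_of_mem (Ioo_mem_nhdsLT one_pos) fun σ hσ => hσ_le σ hσ y hy)
  intro y hy
  have hlt := lt_of_eventually_le_of_hasDerivAt
    (eventually_of_mem (isOpen_Ioo.mem_nhds hy) h_le)
    (hasDerivAt_riccatiBarrier 1 hy.1.ne' (by nlinarith [hy.1, hy.2])) (hq y hy)
    (riccatiBarrier_deriv_lt_of_touch hn' one_pos le_rfl hy (hode y hy) ∘ Eq.symm)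
  simpa only [riccatiBarrier, one_mul] using hlt

theorem riccati_comparison_J (n : ℕ) (hn : 1 ≤ n) (q q' : ℝ → ℝ)
    (hq : ∀ y ∈ Set.Ioo (0:ℝ) 1, HasDerivAt q (q' y) y)
    (hq'cont : ContinuousOn q' (Set.Ioo 0 1))
    (hode : ∀ y ∈ Set.Ioo (0:ℝ) 1,
      (1 / (n : ℝ)) * q' y + q y ^ 2 + q y / ((n : ℝ) * y) + 1 - 1 / y ^ 2 = 0)
    (hasym : (fun y => q y - 1 / y) =O[nhdsWithin 0 (Set.Ioi 0)] (fun _ => (1:ℝ))) :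
    ∀ y ∈ Set.Ioo (0:ℝ) 1, Real.sqrt (1 - y ^ 2) / y < q y :=
  riccati_comparison_J_general n hn q q' hq hode hasym
end

section
/- For every integer n ≥ 1 and c ∈ [1/n, 1], the function p_c(y) = √(1+y²)/y - y/(2n(1+c+y²)) is a supersolution on (0,∞) of the Riccati equation (1/n) q' + q² + q/(ny) - 1 - 1/y² = 0; that is, (1/n) p_c'(y) + p_c(y)² + p_c(y)/(ny) - 1 - 1/y² ≥ 0 for all y > 0, with strict inequality when c > 1/n. -/
/-!
Write `s = √(1 + y²)` and `A = 1 + c + y² = s² + c`. In the residual of the trial function the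
terms in `1/y²` cancel because `s² = 1 + y²`, and what is left is
`(4νc(s² + c) + s(s² - 5 - 4c)) / (4ν²sA²)`. For `s > 1`, `c ≤ 1` and `νc ≥ 1` the numerator is
at least `4(s² + c) + s(s² - 5 - 4c) ≥ (s - 1)(s² + 5s - 4) > 0`.
-/

open Real

namespace Riccati

noncomputable def residual (ν : ℝ) (q : ℝ → ℝ) (y : ℝ) : ℝ :=
  1 / ν * deriv q y + q y ^ 2 + q y / (ν * y) - 1 - 1 / y ^ 2

noncomputable def trial (ν c : ℝ) (z : ℝ) : ℝ :=
  √(1 + z ^ 2) / z - z / (2 * ν * (1 + c + z ^ 2))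

def numerator (ν c t : ℝ) : ℝ :=
  4 * ν * c * (t ^ 2 + c) + t * (t ^ 2 - 5 - 4 * c)

theorem numerator_pos {ν c t : ℝ} (ht : 1 < t) (hc₀ : 0 ≤ c) (hc₁ : c ≤ 1) (hνc : 1 ≤ ν * c) :
    0 < numerator ν c t := by
  have hquad : 0 < t ^ 2 + 5 * t - 4 := by nlinarith
  calc 0 < (t - 1) * (t ^ 2 + 5 * t - 4) := mul_pos (by linarith) hquad
    _ ≤ 4 * (t ^ 2 + c) + t * (t ^ 2 - 5 - 4 * c) := by
      nlinarith [mul_nonneg (sub_nonneg.2 hc₁) (sub_nonneg.2 ht.le)]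
    _ ≤ numerator ν c t := by
      unfold numerator
      nlinarith [mul_le_mul_of_nonneg_right hνc (by positivity : 0 ≤ t ^ 2 + c)]

theorem hasDerivAt_sqrt_one_add_sq_div_self {y : ℝ} (hy : y ≠ 0) :
    HasDerivAt (fun z => √(1 + z ^ 2) / z) (-1 / (√(1 + y ^ 2) * y ^ 2)) y := by
  have hpos : 0 < 1 + y ^ 2 := by positivity
  have hsqrt : HasDerivAt (fun z => √(1 + z ^ 2)) (2 * y / (2 * √(1 + y ^ 2))) y :=
    (((hasDerivAt_pow 2 y).const_add 1).congr_deriv (by ring)).sqrt hpos.ne'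
  refine (hsqrt.div (hasDerivAt_id' y) hy).congr_deriv ?_
  have hs : √(1 + y ^ 2) ^ 2 = 1 + y ^ 2 := sq_sqrt hpos.le
  field_simp
  linear_combination -hs

theorem hasDerivAt_div_two_mul_add_sq {ν a y : ℝ} (hν : ν ≠ 0) (ha : a + y ^ 2 ≠ 0) :
    HasDerivAt (fun z => z / (2 * ν * (a + z ^ 2))) ((a - y ^ 2) / (2 * ν * (a + y ^ 2) ^ 2)) y := by
  have hden : HasDerivAt (fun z => 2 * ν * (a + z ^ 2)) (2 * ν * (2 * y)) y :=
    (((hasDerivAt_pow 2 y).const_add a).congr_deriv (by ring)).const_mul _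
  refine ((hasDerivAt_id' y).div hden (by positivity)).congr_deriv ?_
  field_simp
  ring

theorem deriv_trial {ν c y : ℝ} (hν : ν ≠ 0) (hy : y ≠ 0) (hA : 1 + c + y ^ 2 ≠ 0) :
    deriv (trial ν c) y =
      -1 / (√(1 + y ^ 2) * y ^ 2) - (1 + c - y ^ 2) / (2 * ν * (1 + c + y ^ 2) ^ 2) :=
  ((hasDerivAt_sqrt_one_add_sq_div_self hy).sub (hasDerivAt_div_two_mul_add_sq hν hA)).deriv

theorem residual_trial {ν c y : ℝ} (hν : ν ≠ 0) (hy : y ≠ 0) (hA : 1 + c + y ^ 2 ≠ 0) :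
    residual ν (trial ν c) y =
      numerator ν c √(1 + y ^ 2) /
        (4 * ν ^ 2 * √(1 + y ^ 2) * (√(1 + y ^ 2) ^ 2 + c) ^ 2) := by
  rw [residual, deriv_trial hν hy hA, trial]
  set s := √(1 + y ^ 2)
  have hy2 : y ^ 2 = s ^ 2 - 1 := by linarith [sq_sqrt (by positivity : (0 : ℝ) ≤ 1 + y ^ 2)]
  have hs : s ≠ 0 := (sqrt_pos.2 (by positivity)).ne'
  have hA' : s ^ 2 + c ≠ 0 := fun h => hA (by linear_combination h + hy2)
  unfold numerator
  field_simp
  -- after clearing denominators `y` occurs only through `y²`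
  rw [hy2]
  ring

end Riccati

theorem riccati_supersolution_I (n : ℕ) (hn : 1 ≤ n) (c : ℝ)
    (hc : c ∈ Set.Icc (1 / (n : ℝ)) 1) :
    (∀ y : ℝ, 0 < y →
      (1 / (n : ℝ)) * deriv
          (fun z : ℝ => Real.sqrt (1 + z ^ 2) / z - z / (2 * (n : ℝ) * (1 + c + z ^ 2))) y
        + (Real.sqrt (1 + y ^ 2) / y - y / (2 * (n : ℝ) * (1 + c + y ^ 2))) ^ 2
        + (Real.sqrt (1 + y ^ 2) / y - y / (2 * (n : ℝ) * (1 + c + y ^ 2))) / ((n : ℝ) * y)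
        - 1 - 1 / y ^ 2 ≥ 0) ∧
    (1 / (n : ℝ) < c → ∀ y : ℝ, 0 < y →
      (1 / (n : ℝ)) * deriv
          (fun z : ℝ => Real.sqrt (1 + z ^ 2) / z - z / (2 * (n : ℝ) * (1 + c + z ^ 2))) y
        + (Real.sqrt (1 + y ^ 2) / y - y / (2 * (n : ℝ) * (1 + c + y ^ 2))) ^ 2
        + (Real.sqrt (1 + y ^ 2) / y - y / (2 * (n : ℝ) * (1 + c + y ^ 2))) / ((n : ℝ) * y)
        - 1 - 1 / y ^ 2 > 0) := by
  obtain ⟨hc₁, hc₂⟩ := hc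
  have hν : (0 : ℝ) < n := by exact_mod_cast hn
  have hc₀ : 0 < c := (one_div_pos.2 hν).trans_le hc₁
  have hνc : 1 ≤ (n : ℝ) * c := (div_le_iff₀' hν).1 hc₁
  have residual_pos (y : ℝ) (hy : 0 < y) : 0 < Riccati.residual n (Riccati.trial n c) y := by
    have hs : 1 < √(1 + y ^ 2) := (lt_sqrt zero_le_one).2 (by nlinarith)
    rw [Riccati.residual_trial hν.ne' hy.ne' (by positivity)]
    exact div_pos (Riccati.numerator_pos hs hc₀.le hc₂ hνc) (by positivity)
  exact ⟨fun y hy => (residual_pos y hy).le, fun _ y hy => residual_pos y hy⟩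
end

section
/- In the setting of the spectral expansion (Hilbert spaces X ↪ H compactly, orthonormal basis (ι u_j) of H with eigenvalues λ_j² and ‖v‖_X² = Σ_j λ_j²(ιv, ιu_j)², fix an eigenvalue λ and spectral gap τ > 0 with |λ_j² - λ²| ≥ τ whenever λ_j ≠ λ. Let P be the X-orthogonal-type projection P v = Σ_{λ_j ≠ λ} (ιv, ιu_j) u_j. If v ∈ X satisfies (λ² ι*Bι - A*BA)v = ι*Bw for some w ∈ H, then ‖ι P v‖_H ≤ ‖w‖_H / τ and ‖P v‖_X ≤ √(λ² + τ)·‖w‖_H / τ. -/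
/-!
In the eigenbasis the equation for `v` reads `⟪w, ι u_j⟫ = (μ² - λ_j²) c_j` with
`c_j = ⟪ι v, ι u_j⟫`. Off the eigenvalue `μ` the gap gives `τ² c_j² ≤ ⟪w, ι u_j⟫²`, and, writing
`λ_j² = μ² + d` with `|d| ≥ τ`, also `τ² λ_j² ≤ (μ² + τ) d²`. Since `‖ι P v‖² = Σ c_j²` and
`‖P v‖² = ‖A P v‖² = Σ λ_j² c_j²` (sums over `λ_j ≠ μ`), both estimates follow termwise from
Bessel's inequality for `w`.
-/

open scoped RealInnerProductSpace

section OrthogonalExpansion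

variable {ι E : Type*} [NormedAddCommGroup E] [InnerProductSpace ℝ E] {e : ι → E} {c : ι → ℝ}
  {x : E}

theorem inner_eq_mul_of_hasSum [DecidableEq ι] {d : ι → ℝ}
    (he : ∀ i j, ⟪e i, e j⟫ = if i = j then d i else 0) (hx : HasSum (fun i => c i • e i) x)
    (k : ι) : ⟪x, e k⟫ = d k * c k := by
  have hterm :
      (fun i => innerSL ℝ (e k) (c i • e i)) = fun i => if i = k then d k * c k else 0 := by
    funext i
    rw [innerSL_apply_apply, inner_smul_right, he k i]
    by_cases hik : i = k
    · simp [hik, mul_comm]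
    · simp [hik, Ne.symm hik]
  have h := hx.mapL (innerSL ℝ (e k))
  rw [hterm] at h
  rw [real_inner_comm]
  exact h.unique (hasSum_ite_eq k _)

theorem hasSum_mul_sq_of_hasSum [DecidableEq ι] {d : ι → ℝ}
    (he : ∀ i j, ⟪e i, e j⟫ = if i = j then d i else 0) (hx : HasSum (fun i => c i • e i) x) :
    HasSum (fun i => d i * c i ^ 2) (‖x‖ ^ 2) := by
  have h := hx.mapL (innerSL ℝ x)
  simp only [innerSL_apply_apply, inner_smul_right, real_inner_self_eq_norm_sq] at h
  have hterm : (fun i => c i * ⟪x, e i⟫) = fun i => d i * c i ^ 2 := by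
    funext i
    rw [inner_eq_mul_of_hasSum he hx]
    ring
  rwa [hterm] at h

theorem Orthonormal.hasSum_sq_of_hasSum (he : Orthonormal ℝ e)
    (hx : HasSum (fun i => c i • e i) x) : HasSum (fun i => c i ^ 2) (‖x‖ ^ 2) := by
  classical
  simpa using hasSum_mul_sq_of_hasSum (d := fun _ => 1) (orthonormal_iff_ite.mp he) hx

theorem Orthonormal.le_mul_norm_sq_of_hasSum (he : Orthonormal ℝ e) {f : ι → ℝ} {a C : ℝ}
    (x : E) (hf : HasSum f a) (hC : 0 ≤ C) (hle : ∀ i, f i ≤ C * ⟪x, e i⟫ ^ 2) :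
    a ≤ C * ‖x‖ ^ 2 := by
  have hsq : ∀ i, ‖⟪e i, x⟫‖ ^ 2 = ⟪x, e i⟫ ^ 2 := fun i => by
    rw [Real.norm_eq_abs, sq_abs, real_inner_comm]
  have hsum : Summable fun i => C * ⟪x, e i⟫ ^ 2 :=
    ((he.inner_products_summable x).congr hsq).mul_left C
  calc a ≤ ∑' i, C * ⟪x, e i⟫ ^ 2 := hasSum_le hle hf hsum.hasSum
    _ = C * ∑' i, ⟪x, e i⟫ ^ 2 := tsum_mul_left
    _ ≤ C * ‖x‖ ^ 2 := by
      gcongr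
      simpa only [hsq] using he.tsum_inner_products_le x

end OrthogonalExpansion

theorem sq_mul_le_add_mul_sq_sub_of_le_abs_sub {a b τ : ℝ} (ha : 0 ≤ a) (hτ : 0 ≤ τ)
    (h : τ ≤ |a - b|) : τ ^ 2 * b ≤ (a + τ) * (a - b) ^ 2 := by
  have hsq : τ ^ 2 ≤ (a - b) ^ 2 := by simpa using pow_le_pow_left₀ hτ h 2
  have hlin : (b - a) * τ ≤ (a - b) ^ 2 :=
    calc (b - a) * τ ≤ |a - b| * τ := by gcongr; rw [abs_sub_comm]; exact le_abs_self _
      _ ≤ |a - b| * |a - b| := by gcongr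
      _ = (a - b) ^ 2 := by rw [abs_mul_abs_self, sq]
  nlinarith [mul_le_mul_of_nonneg_left hsq ha, mul_le_mul_of_nonneg_left hlin hτ]

section SpectralGap

variable {κ : Type*} {lam c : κ → ℝ} {μ τ : ℝ}

theorem sq_mul_indicator_sq_le (hτ : 0 ≤ τ) (hgap : ∀ j, lam j ≠ μ → τ ≤ |lam j ^ 2 - μ ^ 2|)
    (j : κ) : τ ^ 2 * {j | lam j ≠ μ}.indicator c j ^ 2 ≤ ((μ ^ 2 - lam j ^ 2) * c j) ^ 2 := by
  by_cases hj : lam j = μ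
  · rw [Set.indicator_of_notMem (not_not.mpr hj) c]
    nlinarith [sq_nonneg ((μ ^ 2 - lam j ^ 2) * c j)]
  · rw [Set.indicator_of_mem hj c, mul_pow]
    gcongr ?_ * _
    exact sq_le_sq.mpr (by rw [abs_of_nonneg hτ, abs_sub_comm]; exact hgap j hj)

theorem sq_mul_sq_mul_indicator_sq_le (hτ : 0 ≤ τ)
    (hgap : ∀ j, lam j ≠ μ → τ ≤ |lam j ^ 2 - μ ^ 2|) (j : κ) :
    τ ^ 2 * (lam j ^ 2 * {j | lam j ≠ μ}.indicator c j ^ 2) ≤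
      (μ ^ 2 + τ) * ((μ ^ 2 - lam j ^ 2) * c j) ^ 2 := by
  by_cases hj : lam j = μ
  · rw [Set.indicator_of_notMem (not_not.mpr hj) c]
    nlinarith [sq_nonneg μ, sq_nonneg ((μ ^ 2 - lam j ^ 2) * c j)]
  · have hgapj : τ ≤ |μ ^ 2 - lam j ^ 2| := abs_sub_comm (lam j ^ 2) (μ ^ 2) ▸ hgap j hj
    rw [Set.indicator_of_mem hj c]
    nlinarith [mul_le_mul_of_nonneg_right
      (sq_mul_le_add_mul_sq_sub_of_le_abs_sub (sq_nonneg μ) hτ hgapj) (sq_nonneg (c j))]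

end SpectralGap

theorem resolvent_estimates_general
    {X H : Type*} [NormedAddCommGroup X] [InnerProductSpace ℝ X]
    [NormedAddCommGroup H] [InnerProductSpace ℝ H]
    (ι : X →L[ℝ] H)
    (A : X →L[ℝ] H) (hA : ∀ u : X, ‖A u‖ = ‖u‖)
    (u : ℕ → X) (lam : ℕ → ℝ)
    (honb : Orthonormal ℝ (fun j => ι (u j)))
    (hsum : ∀ v : X, HasSum (fun j => (inner ℝ (ι v) (ι (u j)) : ℝ) • u j) v)
    (hAu : ∀ j k, (inner ℝ (A (u j)) (A (u k)) : ℝ) = if j = k then (lam j) ^ 2 else 0)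
    (μ τ : ℝ) (hτ : 0 < τ)
    (hgap : ∀ j, lam j ≠ μ → τ ≤ |(lam j) ^ 2 - μ ^ 2|)
    (v Pv : X) (w : H)
    (heq : ∀ z : X,
      μ ^ 2 * (inner ℝ (ι v) (ι z) : ℝ) - (inner ℝ (A v) (A z) : ℝ) = (inner ℝ w (ι z) : ℝ))
    (hP : HasSum
      (fun j : {j : ℕ // lam j ≠ μ} => (inner ℝ (ι v) (ι (u j)) : ℝ) • u (j : ℕ)) Pv) :
    ‖ι Pv‖ ≤ ‖w‖ / τ ∧ ‖Pv‖ ≤ Real.sqrt (μ ^ 2 + τ) * ‖w‖ / τ := by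
  set c : ℕ → ℝ := fun j => ⟪ι v, ι (u j)⟫
  set f := {j | lam j ≠ μ}.indicator c
  have hK : 0 ≤ μ ^ 2 + τ := by positivity
  have hw : ∀ j, ⟪w, ι (u j)⟫ = (μ ^ 2 - lam j ^ 2) * c j := fun j => by
    rw [← heq, inner_eq_mul_of_hasSum hAu (by simpa using (hsum v).mapL A)]
    ring
  have hPv : HasSum (fun j => f j • u j) Pv := by
    rw [← Set.indicator_smul_left]
    exact hasSum_subtype_iff_indicator.mp hP
  have hιPv : HasSum (fun j => f j ^ 2) (‖ι Pv‖ ^ 2) :=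
    honb.hasSum_sq_of_hasSum (by simpa using hPv.mapL ι)
  have hAPv : HasSum (fun j => lam j ^ 2 * f j ^ 2) (‖Pv‖ ^ 2) := by
    rw [← hA]
    exact hasSum_mul_sq_of_hasSum hAu (by simpa using hPv.mapL A)
  have hιest : (τ * ‖ι Pv‖) ^ 2 ≤ ‖w‖ ^ 2 := by
    simpa [mul_pow] using honb.le_mul_norm_sq_of_hasSum w (hιPv.mul_left (τ ^ 2)) zero_le_one
      fun j => by rw [one_mul, hw]; exact sq_mul_indicator_sq_le hτ.le hgap j
  have hest : (τ * ‖Pv‖) ^ 2 ≤ (√(μ ^ 2 + τ) * ‖w‖) ^ 2 := by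
    rw [mul_pow, mul_pow, Real.sq_sqrt hK]
    exact honb.le_mul_norm_sq_of_hasSum w (hAPv.mul_left (τ ^ 2)) hK
      fun j => by rw [hw]; exact sq_mul_sq_mul_indicator_sq_le hτ.le hgap j
  rw [le_div_iff₀ hτ, le_div_iff₀ hτ, mul_comm ‖ι Pv‖, mul_comm ‖Pv‖]
  exact ⟨(sq_le_sq₀ (by positivity) (by positivity)).mp hιest,
    (sq_le_sq₀ (by positivity) (by positivity)).mp hest⟩

theorem resolvent_estimates
    {X H : Type*} [NormedAddCommGroup X] [InnerProductSpace ℝ X] [CompleteSpace X]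
    [NormedAddCommGroup H] [InnerProductSpace ℝ H] [CompleteSpace H]
    (ι : X →L[ℝ] H) (hι : IsCompactOperator ι)
    (A : X →L[ℝ] H) (hA : ∀ u : X, ‖A u‖ = ‖u‖)
    (u : ℕ → X) (lam : ℕ → ℝ)
    (honb : Orthonormal ℝ (fun j => ι (u j)))
    (hexp : ∀ v : X, ‖v‖ ^ 2 = ∑' j, (lam j) ^ 2 * (inner ℝ (ι v) (ι (u j)) : ℝ) ^ 2)
    (hsum : ∀ v : X, HasSum (fun j => (inner ℝ (ι v) (ι (u j)) : ℝ) • u j) v)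
    (hAu : ∀ j k, (inner ℝ (A (u j)) (A (u k)) : ℝ) = if j = k then (lam j) ^ 2 else 0)
    (μ τ : ℝ) (hτ : 0 < τ)
    (hgap : ∀ j, lam j ≠ μ → τ ≤ |(lam j) ^ 2 - μ ^ 2|)
    (v Pv : X) (w : H)
    (heq : ∀ z : X,
      μ ^ 2 * (inner ℝ (ι v) (ι z) : ℝ) - (inner ℝ (A v) (A z) : ℝ) = (inner ℝ w (ι z) : ℝ))
    (hP : HasSum
      (fun j : {j : ℕ // lam j ≠ μ} => (inner ℝ (ι v) (ι (u j)) : ℝ) • u (j : ℕ)) Pv) :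
    ‖ι Pv‖ ≤ ‖w‖ / τ ∧ ‖Pv‖ ≤ Real.sqrt (μ ^ 2 + τ) * ‖w‖ / τ :=
  resolvent_estimates_general ι A hA u lam honb hsum hAu μ τ hτ hgap v Pv w heq hP
end
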